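/- arXiv:2202.10764 — 3 statements merged into one kernel-verified Lean document; each statement's English description precedes it below -/
import Mathlib

section
/- Let E be a complex Banach space, let z₀ ∈ ℂ, and let F : ℂ → E be meromorphic at z₀. Suppose that for all s in some punctured neighborhood of z₀ with Im((s − z₀)²) ≠ 0 one has ‖F(s)‖ · |Im((s − z₀)²)| ≤ 1. Then the meromorphic order of F at z₀ is at least −2; i.e., F has a pole of order at most 2 at z₀. -/
/-!
If `(s - z₀)² • F s` stays bounded along some sequence `s → z₀`, then `(· - z₀)² • F` cannot
have a pole at `z₀`, since at a pole the norm tends to infinity; hence `ord F ≥ -2`. Such a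
sequence is supplied by the diagonal `s = z₀ + t (1 + i)`, where `(s - z₀)² = 2 t² i` is purely
imaginary, so that the hypothesis reads `‖s - z₀‖² ‖F s‖ ≤ 1`.
-/

open Complex Filter Topology

section

variable {𝕜 E : Type*} [NontriviallyNormedField 𝕜] [NormedAddCommGroup E] [NormedSpace 𝕜 E]
  {f : 𝕜 → E} {x : 𝕜}

theorem meromorphicOrderAt_nonneg_of_frequently_norm_le {C : ℝ}
    (h : ∃ᶠ s in 𝓝[≠] x, ‖f s‖ ≤ C) : 0 ≤ meromorphicOrderAt f x := by
  by_contra! hneg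
  have hlarge : ∀ᶠ s in 𝓝[≠] x, C < ‖f s‖ :=
    (tendsto_norm_atTop_iff_cobounded.mpr
      (tendsto_cobounded_of_meromorphicOrderAt_neg hneg)).eventually_gt_atTop C
  exact h (hlarge.mono fun _ hs => not_le.mpr hs)

theorem neg_le_meromorphicOrderAt_of_frequently_norm_zpow_mul_le (hf : MeromorphicAt f x)
    (n : ℤ) {C : ℝ} (h : ∃ᶠ s in 𝓝[≠] x, ‖s - x‖ ^ n * ‖f s‖ ≤ C) :
    ((-n : ℤ) : WithTop ℤ) ≤ meromorphicOrderAt f x := by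
  have hsmul : 0 ≤ meromorphicOrderAt ((· - x) ^ n • f) x :=
    meromorphicOrderAt_nonneg_of_frequently_norm_le (C := C) <| h.mono fun s hs => by
      rwa [Pi.smul_apply', norm_smul, Pi.pow_apply, norm_zpow]
  rw [meromorphicOrderAt_smul (by fun_prop) hf, meromorphicOrderAt_zpow_id_sub_const] at hsmul
  cases hord : meromorphicOrderAt f x with
  | top => exact le_top
  | coe m =>
    rw [hord] at hsmul
    have : (0 : ℤ) ≤ n + m := by exact_mod_cast hsmul
    exact_mod_cast (by omega : -n ≤ m)

end

theorem frequently_abs_im_sq_eq_norm_sq (z₀ : ℂ) :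
    ∃ᶠ s in 𝓝[≠] z₀, |((s - z₀) ^ 2).im| = ‖s - z₀‖ ^ 2 := by
  have hdiag (t : ℝ) : |((t * (1 + I)) ^ 2).im| = ‖(t : ℂ) * (1 + I)‖ ^ 2 := by
    rw [Complex.sq_norm, Complex.normSq_apply]
    simp [sq, mul_self_nonneg]
  have hray : Tendsto (fun t : ℝ => z₀ + t * (1 + I)) (𝓝[≠] 0) (𝓝[≠] z₀) := by
    refine tendsto_nhdsWithin_iff.mpr ⟨?_, ?_⟩
    · have : Continuous (fun t : ℝ => z₀ + t * (1 + I)) := by fun_prop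
      simpa using this.continuousWithinAt (s := {0}ᶜ) (x := 0) |>.tendsto
    · filter_upwards [self_mem_nhdsWithin] with t ht
      have : (1 + I : ℂ) ≠ 0 := by simp [Complex.ext_iff]
      simpa [this] using ht
  exact hray.frequently (Frequently.of_forall fun t => by simpa using hdiag t)

/-- If a meromorphic function `F` satisfies `‖F s‖ ≤ |Im((s - z₀)²)|⁻¹` on a punctured
neighborhood of `z₀`, then its pole at `z₀` has order at most `2`. -/
theorem stmt1 {E : Type*} [NormedAddCommGroup E] [NormedSpace ℂ E]
    (z₀ : ℂ) (F : ℂ → E) (hF : MeromorphicAt F z₀)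
    (hbound : ∀ᶠ s in nhdsWithin z₀ {z₀}ᶜ,
      ((s - z₀) ^ 2).im ≠ 0 → ‖F s‖ * |((s - z₀) ^ 2).im| ≤ 1) :
    (-2 : WithTop ℤ) ≤ meromorphicOrderAt F z₀ := by
  refine neg_le_meromorphicOrderAt_of_frequently_norm_zpow_mul_le hF 2 (C := 1) ?_
  refine ((hbound.and self_mem_nhdsWithin).and_frequently
    (frequently_abs_im_sq_eq_norm_sq z₀)).mono ?_
  rintro s ⟨⟨hbound_s, hs⟩, hdiag⟩
  have hpos : 0 < ‖s - z₀‖ ^ 2 := by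
    have : s - z₀ ≠ 0 := sub_ne_zero.mpr hs
    positivity
  rw [zpow_ofNat, ← hdiag, mul_comm]
  exact hbound_s (abs_pos.mp (hdiag ▸ hpos))
end

section
/- Fix a real number ω > 0 and s ∈ ℂ, and for κ ∈ ℝ set β_κ(s) := (1/2)·Γ((s + iωκ + 1)/2)·Γ((s − iωκ + 1)/2). Then, as κ → +∞ along the reals, (β_κ(s) / β_κ(1 − s)) · (ωκ/2)^{1 − 2s} → 1, where (ωκ/2)^{1−2s} denotes the complex power of the positive real number ωκ/2. -/
open Complex Filter

/-- `β_κ(s) = (1/2)·Γ((s + iωκ + 1)/2)·Γ((s − iωκ + 1)/2)`. -/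
noncomputable def betaFun (ω κ : ℝ) (s : ℂ) : ℂ :=
  (1/2) * Complex.Gamma ((s + Complex.I * ω * κ + 1) / 2) *
    Complex.Gamma ((s - Complex.I * ω * κ + 1) / 2)

/-!
Write `g_a(t) = Γ(a + it) (it)^{-a}`. All the `g_a` are asymptotically equivalent as `t → ∞`:
the functional equation gives `g_{a+1} ~ g_a`, and for `Re z > 0`, `0 < Re c < 1` the identity
`Γ(z + c + it) / Γ(z + it) = Γ(c) / B(z + it, c)` reduces `g_{z+c} ~ g_z` to `B(w, c) w^c → Γ(c)`
along the vertical line `w = z + it`. For this, substitute `x = e^{-u}` in the Beta integral,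
`B(w, c) = ∫₀^∞ e^{-wu} (1 - e^{-u})^{c-1} du`, split off `∫₀^∞ e^{-wu} u^{c-1} du = Γ(c) w^{-c}`,
and integrate the rest by parts: it gains a factor `w⁻¹` in front of an integral that is bounded
on the line.

Conjugation handles `Γ(a - it)`, and since `(it)^{-a} (-it)^{-a} = t^{-2a}`, with `t = ωκ/2` the
quotient `β_κ(s) / β_κ(1 - s) · t^{1-2s}` is `(g_{a₁} ḡ_{ā₁}) / (g_{a₂} ḡ_{ā₂})` for
`a₁ = (s + 1)/2` and `a₂ = (2 - s)/2`: a quotient of equivalent functions.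
-/

open MeasureTheory Set Asymptotics Topology ComplexConjugate

namespace GammaVertical

/-! ### Estimates for `(1 - e^{-u})^e` -/

lemma hasDerivAt_ofReal_cpow {t : ℝ} (ht : 0 < t) (e : ℂ) :
    HasDerivAt (fun y : ℝ => (y : ℂ) ^ e) (e * (t : ℂ) ^ (e - 1)) t := by
  simpa using ((hasDerivAt_id (t : ℂ)).cpow_const (Or.inl (by simpa using ht))).comp_ofReal

lemma norm_ofReal_cpow_sub_ofReal_cpow_le {e : ℂ} (he : e.re ≤ 1) {x y : ℝ} (hx : 0 < x)
    (hxy : x ≤ y) : ‖(y : ℂ) ^ e - (x : ℂ) ^ e‖ ≤ ‖e‖ * x ^ (e.re - 1) * (y - x) := by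
  have hderiv : ∀ t ∈ Icc x y, ‖e * (t : ℂ) ^ (e - 1)‖ ≤ ‖e‖ * x ^ (e.re - 1) := fun t ht => by
    rw [norm_mul, norm_cpow_eq_rpow_re_of_pos (hx.trans_le ht.1), sub_re, one_re]
    exact mul_le_mul_of_nonneg_left (Real.rpow_le_rpow_of_nonpos hx ht.1 (by linarith))
      (norm_nonneg e)
  simpa [abs_of_nonneg (sub_nonneg.2 hxy)] using Convex.norm_image_sub_le_of_norm_hasDerivWithin_le
    (fun t ht => (hasDerivAt_ofReal_cpow (hx.trans_le ht.1) e).hasDerivWithinAt) hderiv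
    (convex_Icc x y) (left_mem_Icc.2 hxy) (right_mem_Icc.2 hxy)

lemma div_one_add_le_one_sub_exp_neg {u : ℝ} (hu : 0 ≤ u) : u / (1 + u) ≤ 1 - Real.exp (-u) := by
  have h : Real.exp (-u) * (1 + u) ≤ 1 := by
    rw [Real.exp_neg, inv_mul_le_one₀ (Real.exp_pos u)]
    linarith [Real.add_one_le_exp u]
  rw [div_le_iff₀ (by positivity)]
  nlinarith

lemma rpow_div_one_add {u : ℝ} (hu : 0 < u) (r : ℝ) :
    (u / (1 + u)) ^ r = u ^ r * (1 + u) ^ (-r) := by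
  rw [Real.div_rpow hu.le (by positivity), Real.rpow_neg (by positivity), div_eq_mul_inv]

lemma norm_one_sub_exp_neg_cpow_le {e : ℂ} (he : e.re ≤ 0) {u : ℝ} (hu : 0 < u) :
    ‖((1 - Real.exp (-u) : ℝ) : ℂ) ^ e‖ ≤ u ^ e.re * (1 + u) ^ (-e.re) := by
  have hb := div_one_add_le_one_sub_exp_neg hu.le
  rw [norm_cpow_eq_rpow_re_of_pos ((by positivity : 0 < u / (1 + u)).trans_le hb),
    ← rpow_div_one_add hu]
  exact Real.rpow_le_rpow_of_nonpos (by positivity) hb he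

lemma norm_one_sub_exp_neg_cpow_sub_cpow_le {e : ℂ} (he : e.re ≤ 1) {u : ℝ} (hu : 0 < u) :
    ‖((1 - Real.exp (-u) : ℝ) : ℂ) ^ e - (u : ℂ) ^ e‖
      ≤ ‖e‖ * u ^ (e.re + 1) * (1 + u) ^ (-e.re) := by
  have hb := div_one_add_le_one_sub_exp_neg hu.le
  have hb0 : 0 < 1 - Real.exp (-u) := (by positivity : 0 < u / (1 + u)).trans_le hb
  calc ‖((1 - Real.exp (-u) : ℝ) : ℂ) ^ e - (u : ℂ) ^ e‖
      ≤ ‖e‖ * (1 - Real.exp (-u)) ^ (e.re - 1) * (u - (1 - Real.exp (-u))) := by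
        rw [norm_sub_rev]
        exact norm_ofReal_cpow_sub_ofReal_cpow_le he hb0 (by linarith [Real.one_sub_le_exp_neg u])
    _ ≤ ‖e‖ * (u / (1 + u)) ^ (e.re - 1) * (u - u / (1 + u)) := by
        have hpow := Real.rpow_le_rpow_of_nonpos (by positivity) hb (by linarith : e.re - 1 ≤ 0)
        have hdiff : u - (1 - Real.exp (-u)) ≤ u - u / (1 + u) := by linarith
        exact mul_le_mul (mul_le_mul_of_nonneg_left hpow (norm_nonneg e)) hdiff
          (by linarith [Real.one_sub_le_exp_neg u]) (by positivity)
    _ = ‖e‖ * u ^ (e.re + 1) * (1 + u) ^ (-e.re) := by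
        rw [rpow_div_one_add hu, show e.re + 1 = e.re - 1 + 2 by ring,
          show -(e.re - 1) = -e.re + 1 by ring, Real.rpow_add hu, Real.rpow_add_one (by positivity),
          Real.rpow_two]
        field_simp
        ring

/-- The integrand of `betaIntegral w c` in the variable `u = -log x`, without the factor `e^{-wu}`
and minus its singular part `u^{c-1}` at `u = 0`. -/
noncomputable def betaRemainder (c : ℂ) (u : ℝ) : ℂ :=
  ((1 - Real.exp (-u) : ℝ) : ℂ) ^ (c - 1) - (u : ℂ) ^ (c - 1)

noncomputable def betaRemainderDeriv (c : ℂ) (u : ℝ) : ℂ :=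
  (c - 1) * (((1 - Real.exp (-u) : ℝ) : ℂ) ^ (c - 2) * (Real.exp (-u) : ℂ) - (u : ℂ) ^ (c - 2))

lemma hasDerivAt_betaRemainder (c : ℂ) {u : ℝ} (hu : 0 < u) :
    HasDerivAt (betaRemainder c) (betaRemainderDeriv c u) u := by
  have hb : 0 < 1 - Real.exp (-u) := by simpa using hu
  have hexp : HasDerivAt (fun u : ℝ => 1 - Real.exp (-u)) (Real.exp (-u)) u := by
    simpa using ((hasDerivAt_neg u).exp).const_sub 1
  refine (show HasDerivAt (betaRemainder c) _ u from ((hasDerivAt_ofReal_cpow hb (c - 1)).scomp u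
    hexp).sub (hasDerivAt_ofReal_cpow hu (c - 1))).congr_deriv ?_
  rw [betaRemainderDeriv, show c - 1 - 1 = c - 2 by ring, real_smul]
  ring

lemma norm_betaRemainder_le {c : ℂ} (hc : c.re ≤ 2) {u : ℝ} (hu : 0 < u) :
    ‖betaRemainder c u‖ ≤ ‖c - 1‖ * (u ^ c.re * (1 + u) ^ (1 - c.re)) := by
  have h := norm_one_sub_exp_neg_cpow_sub_cpow_le (e := c - 1) (by rw [sub_re, one_re]; linarith) hu
  rwa [sub_re, one_re, sub_add_cancel, neg_sub, mul_assoc] at h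

lemma norm_betaRemainderDeriv_le {c : ℂ} (hc : c.re ≤ 1) {u : ℝ} (hu : 0 < u) :
    ‖betaRemainderDeriv c u‖
      ≤ ‖c - 1‖ * (‖c - 2‖ + 1) * (u ^ (c.re - 1) * (1 + u) ^ (2 - c.re)) := by
  rw [betaRemainderDeriv]
  set b : ℂ := ((1 - Real.exp (-u) : ℝ) : ℂ)
  have hb : b ≠ 0 := ofReal_ne_zero.2 (by simpa using hu : 0 < 1 - Real.exp (-u)).ne'
  -- `e^{-u} = 1 - b` turns the first term into `b^{c-2} - b^{c-1}`
  have hsplit : b ^ (c - 2) * (Real.exp (-u) : ℂ) - (u : ℂ) ^ (c - 2)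
      = (b ^ (c - 2) - (u : ℂ) ^ (c - 2)) - b ^ (c - 1) := by
    rw [show c - 1 = c - 2 + 1 by ring, cpow_add _ _ hb, cpow_one,
      show (Real.exp (-u) : ℂ) = 1 - b by simp only [b, ofReal_sub, ofReal_one]; ring]
    ring
  have h₁ : ‖b ^ (c - 2) - (u : ℂ) ^ (c - 2)‖
      ≤ ‖c - 2‖ * (u ^ (c.re - 1) * (1 + u) ^ (2 - c.re)) := by
    have h := norm_one_sub_exp_neg_cpow_sub_cpow_le (e := c - 2)
      (by rw [sub_re]; norm_num; linarith) hu
    rwa [sub_re, show (2 : ℂ).re = 2 from rfl, show c.re - 2 + 1 = c.re - 1 by ring, neg_sub,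
      mul_assoc] at h
  have h₂ : ‖b ^ (c - 1)‖ ≤ u ^ (c.re - 1) * (1 + u) ^ (2 - c.re) := by
    refine (norm_one_sub_exp_neg_cpow_le (e := c - 1) (by rw [sub_re, one_re]; linarith)
      hu).trans ?_
    rw [sub_re, one_re, neg_sub]
    gcongr
    · linarith
    · linarith
  rw [hsplit, norm_mul, mul_assoc]
  gcongr
  linarith [norm_sub_le (b ^ (c - 2) - (u : ℂ) ^ (c - 2)) (b ^ (c - 1))]

/-! ### Laplace transforms -/

lemma rpow_mul_one_add_rpow_le {u : ℝ} (hu : 0 < u) (s : ℝ) {m : ℝ} (hm : m ≤ 2) :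
    u ^ s * (1 + u) ^ m ≤ 2 * (u ^ s + u ^ (s + 2)) := by
  have h : (1 + u) ^ m ≤ 2 * (1 + u ^ 2) :=
    calc (1 + u) ^ m ≤ (1 + u) ^ (2 : ℝ) := Real.rpow_le_rpow_of_exponent_le (by linarith) hm
      _ ≤ 2 * (1 + u ^ 2) := by rw [Real.rpow_two]; nlinarith [sq_nonneg (u - 1)]
  calc u ^ s * (1 + u) ^ m ≤ u ^ s * (2 * (1 + u ^ 2)) := by gcongr
    _ = 2 * (u ^ s + u ^ (s + 2)) := by rw [Real.rpow_add hu, Real.rpow_two]; ring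

lemma integrableOn_rpow_mul_exp_neg_mul {s σ : ℝ} (hs : -1 < s) (hσ : 0 < σ) :
    IntegrableOn (fun u : ℝ => u ^ s * Real.exp (-σ * u)) (Ioi 0) := by
  simpa using integrableOn_rpow_mul_exp_neg_mul_rpow hs one_pos hσ

section LaplaceOfDominated

variable {g : ℝ → ℂ} {K s m : ℝ} {w : ℂ}

lemma norm_cexp_neg_mul_mul_le (hg : ∀ u, 0 < u → ‖g u‖ ≤ K * (u ^ s * (1 + u) ^ m))
    (hm : m ≤ 2) {u : ℝ} (hu : 0 < u) :
    ‖cexp (-(w * u)) * g u‖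
      ≤ 2 * K * (u ^ s * Real.exp (-w.re * u) + u ^ (s + 2) * Real.exp (-w.re * u)) := by
  have hK : 0 ≤ K := nonneg_of_mul_nonneg_left ((norm_nonneg _).trans (hg u hu)) (by positivity)
  rw [norm_mul, norm_exp, show (-(w * u)).re = -w.re * u by simp]
  calc Real.exp (-w.re * u) * ‖g u‖ ≤ Real.exp (-w.re * u) * (K * (2 * (u ^ s + u ^ (s + 2)))) := by
        gcongr
        exact (hg u hu).trans (mul_le_mul_of_nonneg_left (rpow_mul_one_add_rpow_le hu s hm) hK)
    _ = _ := by ring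

lemma integrableOn_cexp_neg_mul_mul (hgm : AEStronglyMeasurable g (volume.restrict (Ioi 0)))
    (hg : ∀ u, 0 < u → ‖g u‖ ≤ K * (u ^ s * (1 + u) ^ m)) (hm : m ≤ 2) (hs : -1 < s)
    (hw : 0 < w.re) : IntegrableOn (fun u : ℝ => cexp (-(w * u)) * g u) (Ioi 0) := by
  refine Integrable.mono' (((integrableOn_rpow_mul_exp_neg_mul hs hw).add
    (integrableOn_rpow_mul_exp_neg_mul (s := s + 2) (by linarith) hw)).const_mul (2 * K)) ?_ ?_
  · exact (Continuous.aestronglyMeasurable (by fun_prop)).mul hgm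
  · filter_upwards [ae_restrict_mem measurableSet_Ioi] with u hu
    simpa using norm_cexp_neg_mul_mul_le (w := w) hg hm hu

lemma tendsto_cexp_neg_mul_mul_atTop (hg : ∀ u, 0 < u → ‖g u‖ ≤ K * (u ^ s * (1 + u) ^ m))
    (hm : m ≤ 2) (hw : 0 < w.re) :
    Tendsto (fun u : ℝ => cexp (-(w * u)) * g u) atTop (𝓝 0) := by
  have h := ((tendsto_rpow_mul_exp_neg_mul_atTop_nhds_zero s _ hw).add
    (tendsto_rpow_mul_exp_neg_mul_atTop_nhds_zero (s + 2) _ hw)).const_mul (2 * K)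
  rw [add_zero, mul_zero] at h
  refine squeeze_zero_norm' ?_ h
  filter_upwards [eventually_gt_atTop 0] with u hu
  simpa using norm_cexp_neg_mul_mul_le (w := w) hg hm hu

lemma tendsto_cexp_neg_mul_mul_nhdsGT_zero (hg : ∀ u, 0 < u → ‖g u‖ ≤ K * (u ^ s * (1 + u) ^ m))
    (hm : m ≤ 2) (hs : 0 < s) :
    Tendsto (fun u : ℝ => cexp (-(w * u)) * g u) (𝓝[>] 0) (𝓝 0) := by
  have hcont : Continuous fun u : ℝ =>
      2 * K * (u ^ s * Real.exp (-w.re * u) + u ^ (s + 2) * Real.exp (-w.re * u)) := by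
    have := Real.continuous_rpow_const hs.le
    have := Real.continuous_rpow_const (by linarith : 0 ≤ s + 2)
    fun_prop
  have h0 := (hcont.tendsto 0).mono_left (nhdsWithin_le_nhds (s := Ioi 0))
  simp only [Real.zero_rpow hs.ne', Real.zero_rpow (by linarith : s + 2 ≠ 0), zero_mul, add_zero,
    mul_zero] at h0
  refine squeeze_zero_norm' ?_ h0
  filter_upwards [self_mem_nhdsWithin] with u hu
  exact norm_cexp_neg_mul_mul_le hg hm hu

end LaplaceOfDominated

lemma norm_cpow_mul_cexp_neg_mul {c w : ℂ} {u : ℝ} (hu : 0 < u) :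
    ‖(u : ℂ) ^ c * cexp (-(w * u))‖ = u ^ c.re * Real.exp (-w.re * u) := by
  rw [norm_mul, norm_cpow_eq_rpow_re_of_pos hu, norm_exp, show (-(w * u)).re = -w.re * u by simp]

lemma integrableOn_cpow_mul_cexp_neg_mul {c w : ℂ} (hc : 0 < c.re) (hw : 0 < w.re) :
    IntegrableOn (fun u : ℝ => (u : ℂ) ^ (c - 1) * cexp (-(w * u))) (Ioi 0) := by
  refine Integrable.mono' (integrableOn_rpow_mul_exp_neg_mul (s := c.re - 1) (by linarith) hw)
    (by fun_prop) ?_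
  filter_upwards [ae_restrict_mem measurableSet_Ioi] with u hu
  rw [norm_cpow_mul_cexp_neg_mul hu, sub_re, one_re]

lemma differentiableOn_integral_cpow_mul_cexp_neg_mul {c : ℂ} (hc : 0 < c.re) :
    DifferentiableOn ℂ (fun w => ∫ u in Ioi (0 : ℝ), (u : ℂ) ^ (c - 1) * cexp (-(w * u)))
      {w | 0 < w.re} := by
  intro w₀ (hw₀ : 0 < w₀.re)
  have hball : ∀ x ∈ Metric.ball w₀ (w₀.re / 2), w₀.re / 2 < x.re := fun x hx => by
    have := (abs_re_le_norm (x - w₀)).trans_lt (mem_ball_iff_norm.1 hx)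
    rw [sub_re] at this
    linarith [abs_lt.1 this]
  refine (hasDerivAt_integral_of_dominated_loc_of_deriv_le (μ := volume.restrict (Ioi 0))
    (F := fun x (u : ℝ) => (u : ℂ) ^ (c - 1) * cexp (-(x * u)))
    (F' := fun x (u : ℝ) => (u : ℂ) ^ (c - 1) * (cexp (-(x * u)) * -u))
    (bound := fun u : ℝ => u ^ c.re * Real.exp (-(w₀.re / 2) * u))
    (Metric.ball_mem_nhds w₀ (by positivity : 0 < w₀.re / 2)) ?_
    (integrableOn_cpow_mul_cexp_neg_mul hc hw₀) ?_ ?_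
    (integrableOn_rpow_mul_exp_neg_mul (by linarith) (by positivity)) ?_).2.differentiableAt
    |>.differentiableWithinAt
  · exact .of_forall fun w => by fun_prop
  · fun_prop
  · filter_upwards [ae_restrict_mem measurableSet_Ioi] with u (hu : 0 < u) x hx
    rw [← mul_assoc, norm_mul, norm_cpow_mul_cexp_neg_mul hu, norm_neg, norm_real,
      Real.norm_of_nonneg hu.le, sub_re, one_re]
    calc u ^ (c.re - 1) * Real.exp (-x.re * u) * u
        ≤ u ^ (c.re - 1) * Real.exp (-(w₀.re / 2) * u) * u := by
          gcongr
          nlinarith [hball x hx]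
      _ = u ^ c.re * Real.exp (-(w₀.re / 2) * u) := by
          rw [Real.rpow_sub_one hu.ne']
          field_simp
  · filter_upwards with u x _
    exact ((((hasDerivAt_id x).mul_const (u : ℂ)).neg).cexp.const_mul _).congr_deriv (by simp)

theorem integral_cpow_mul_cexp_neg_mul_Ioi {c w : ℂ} (hc : 0 < c.re) (hw : 0 < w.re) :
    ∫ u in Ioi (0 : ℝ), (u : ℂ) ^ (c - 1) * cexp (-(w * u)) = Gamma c * w ^ (-c) := by
  have hU : IsOpen {w : ℂ | 0 < w.re} := isOpen_lt continuous_const continuous_re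
  have hR : DifferentiableOn ℂ (fun w : ℂ => Gamma c * w ^ (-c)) {w | 0 < w.re} := fun w hw =>
    ((differentiableAt_id.cpow (differentiableAt_const _) (Or.inl hw)).const_mul _)
      |>.differentiableWithinAt
  -- both sides are holomorphic on `Re w > 0` and agree for real `w > 0`
  refine AnalyticOnNhd.eqOn_of_preconnected_of_frequently_eq
    ((differentiableOn_integral_cpow_mul_cexp_neg_mul hc).analyticOnNhd hU) (hR.analyticOnNhd hU)
    (convex_halfSpace_re_gt 0).isPreconnected (z₀ := 1) (by simp) ?_ hw
  have hreal : Tendsto ((↑) : ℝ → ℂ) (𝓝[≠] 1) (𝓝[≠] 1) := by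
    simpa using continuous_ofReal.continuousWithinAt.tendsto_nhdsWithin
      (x := (1 : ℝ)) (t := {1}ᶜ) (fun x hx => by simpa using hx)
  refine hreal.frequently (Eventually.frequently ?_)
  filter_upwards [(eventually_gt_nhds one_pos).filter_mono nhdsWithin_le_nhds] with r hr
  rw [integral_cpow_mul_exp_neg_mul_Ioi hc hr, one_div,
    inv_cpow _ _ (by simp [arg_ofReal_of_nonneg hr.le, Real.pi_ne_zero.symm]), ← cpow_neg, mul_comm]

lemma integrableOn_cexp_neg_mul_betaRemainder {c w : ℂ} (hc0 : 0 < c.re) (hc2 : c.re ≤ 2)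
    (hw : 0 < w.re) : IntegrableOn (fun u : ℝ => cexp (-(w * u)) * betaRemainder c u) (Ioi 0) :=
  integrableOn_cexp_neg_mul_mul (by unfold betaRemainder; fun_prop)
    (fun _ hu => norm_betaRemainder_le hc2 hu) (by linarith) (by linarith) hw

lemma integral_cexp_neg_mul_betaRemainder {c w : ℂ} (hc0 : 0 < c.re) (hc1 : c.re ≤ 1)
    (hw : 0 < w.re) :
    ∫ u in Ioi (0 : ℝ), cexp (-(w * u)) * betaRemainder c u
      = w⁻¹ * ∫ u in Ioi (0 : ℝ), cexp (-(w * u)) * betaRemainderDeriv c u := by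
  have hrem := fun u (hu : 0 < u) => norm_betaRemainder_le (c := c) (by linarith) hu
  have hderiv := fun u (hu : 0 < u) => norm_betaRemainderDeriv_le hc1 hu
  have hexp : ∀ u : ℝ, HasDerivAt (fun u : ℝ => cexp (-(w * u))) (-w * cexp (-(w * u))) u :=
    fun u => by simpa [mul_comm] using (((hasDerivAt_id (u : ℂ)).const_mul w).neg.cexp.comp_ofReal)
  have hint := integrableOn_cexp_neg_mul_betaRemainder hc0 (by linarith) hw
  have h := integral_Ioi_mul_deriv_eq_deriv_mul (fun u _ => hexp u)
    (fun u hu => hasDerivAt_betaRemainder c hu)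
    (integrableOn_cexp_neg_mul_mul (by unfold betaRemainderDeriv; fun_prop) hderiv (by linarith)
      (by linarith) hw)
    (IntegrableOn.congr_fun (hint.const_mul (-w)) (fun u _ => by simp only [Pi.mul_apply]; ring)
      measurableSet_Ioi)
    (tendsto_cexp_neg_mul_mul_nhdsGT_zero hrem (by linarith) hc0)
    (tendsto_cexp_neg_mul_mul_atTop hrem (by linarith) hw)
  simp only [mul_assoc, integral_const_mul, sub_zero, zero_sub] at h
  rw [h, ← neg_mul, neg_neg, inv_mul_cancel_left₀ (by rintro rfl; simp at hw)]

/-! ### The Beta integral on vertical lines -/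

lemma betaIntegral_eq_integral_cexp_neg_mul (w c : ℂ) :
    betaIntegral w c
      = ∫ u in Ioi (0 : ℝ), cexp (-(w * u)) * ((1 - Real.exp (-u) : ℝ) : ℂ) ^ (c - 1) := by
  have himage : (fun u : ℝ => Real.exp (-u)) '' Ioi 0 = Ioo 0 1 := by
    ext x
    refine ⟨?_, fun hx => ⟨-Real.log x, by simpa using Real.log_neg hx.1 hx.2, by
      simp [Real.exp_log hx.1]⟩⟩
    rintro ⟨u, hu, rfl⟩
    exact ⟨Real.exp_pos _, Real.exp_lt_one_iff.2 (by simpa using hu)⟩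
  rw [betaIntegral, intervalIntegral.integral_of_le zero_le_one, integral_Ioc_eq_integral_Ioo,
    ← himage, integral_image_eq_integral_abs_deriv_smul measurableSet_Ioi
      (fun u _ => by simpa using ((hasDerivAt_neg u).exp).hasDerivWithinAt)
      (fun a _ b _ h => by simpa using Real.exp_injective h)]
  refine setIntegral_congr_fun measurableSet_Ioi fun u _ => ?_
  have hexp : ((Real.exp (-u) : ℝ) : ℂ) ^ (w - 1) = cexp (-u * (w - 1)) := by
    rw [ofReal_exp, ofReal_neg, cpow_def_of_ne_zero (exp_ne_zero _), log_exp (by simp [Real.pi_pos])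
      (by simp [Real.pi_nonneg])]
  rw [abs_neg, abs_of_pos (Real.exp_pos _), hexp, real_smul, ofReal_exp, ofReal_neg, ← mul_assoc,
    ← exp_add, show -(u : ℂ) + -u * (w - 1) = -(w * u) by ring, ofReal_sub, ofReal_one,
    ofReal_exp, ofReal_neg]

theorem betaIntegral_eq_Gamma_mul_cpow_add {c w : ℂ} (hc0 : 0 < c.re) (hc1 : c.re ≤ 1)
    (hw : 0 < w.re) :
    betaIntegral w c = Gamma c * w ^ (-c)
      + w⁻¹ * ∫ u in Ioi (0 : ℝ), cexp (-(w * u)) * betaRemainderDeriv c u := by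
  rw [← integral_cpow_mul_cexp_neg_mul_Ioi hc0 hw, ← integral_cexp_neg_mul_betaRemainder hc0 hc1 hw,
    ← integral_add (integrableOn_cpow_mul_cexp_neg_mul hc0 hw)
      (integrableOn_cexp_neg_mul_betaRemainder hc0 (by linarith) hw),
    betaIntegral_eq_integral_cexp_neg_mul]
  refine setIntegral_congr_fun measurableSet_Ioi fun u _ => ?_
  rw [betaRemainder]
  ring

lemma I_mul_ofReal_ne_zero {t : ℝ} (ht : 0 < t) : I * (t : ℂ) ≠ 0 :=
  mul_ne_zero I_ne_zero (ofReal_ne_zero.2 ht.ne')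

lemma ofReal_mul_cpow {r : ℝ} (hr : 0 < r) {x : ℂ} (hx : x ≠ 0) (e : ℂ) :
    ((r : ℂ) * x) ^ e = (r : ℂ) ^ e * x ^ e := by
  have hr' : (r : ℂ) ≠ 0 := ofReal_ne_zero.2 hr.ne'
  rw [cpow_def_of_ne_zero (mul_ne_zero hr' hx), cpow_def_of_ne_zero hr', cpow_def_of_ne_zero hx,
    log_ofReal_mul hr hx, ← ofReal_log hr.le, ← exp_add, add_mul]

lemma tendsto_mul_inv_add_I (z : ℂ) :
    Tendsto (fun t : ℝ => z * (t : ℂ)⁻¹ + I) atTop (𝓝 I) := by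
  have h : Tendsto (fun t : ℝ => (t : ℂ)⁻¹) atTop (𝓝 0) := by
    simpa [Function.comp_def] using (continuous_ofReal.tendsto 0).comp tendsto_inv_atTop_zero
  simpa using (h.const_mul z).add_const I

lemma add_I_mul_eq {z : ℂ} {t : ℝ} (ht : 0 < t) : z + I * t = t * (z * (t : ℂ)⁻¹ + I) := by
  field_simp [ofReal_ne_zero.2 ht.ne']

lemma tendsto_add_I_mul_div_I_mul (z : ℂ) :
    Tendsto (fun t : ℝ => (z + I * t) / (I * t)) atTop (𝓝 1) := by
  have h := (tendsto_mul_inv_add_I z).div_const I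
  rw [div_self I_ne_zero] at h
  refine h.congr' ?_
  filter_upwards [eventually_gt_atTop 0] with t ht
  rw [add_I_mul_eq ht, mul_comm I, mul_div_mul_left _ _ (ofReal_ne_zero.2 ht.ne')]

lemma tendsto_add_I_mul_cpow_neg_mul_I_mul_cpow (z c : ℂ) :
    Tendsto (fun t : ℝ => (z + I * t) ^ (-c) * (I * t) ^ c) atTop (𝓝 1) := by
  have hI : I ^ (-c) * I ^ c = 1 := by rw [cpow_neg, inv_mul_cancel₀ (by simp [cpow_eq_zero_iff])]
  have h := (((continuousAt_cpow_const (b := -c) (by simp [mem_slitPlane_iff])).tendsto).comp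
    (tendsto_mul_inv_add_I z)).mul_const (I ^ c)
  rw [hI] at h
  refine h.congr' ?_
  filter_upwards [eventually_gt_atTop 0, (tendsto_mul_inv_add_I z).eventually_ne I_ne_zero]
    with t ht hne
  have ht' : (t : ℂ) ^ (-c) * (t : ℂ) ^ c = 1 := by
    rw [cpow_neg, inv_mul_cancel₀ (by simp [cpow_eq_zero_iff, ht.ne'])]
  rw [add_I_mul_eq ht, mul_comm I, ofReal_mul_cpow ht hne, ofReal_mul_cpow ht I_ne_zero]
  simp only [Function.comp_apply]
  linear_combination -(z * (t : ℂ)⁻¹ + I) ^ (-c) * I ^ c * ht'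

lemma tendsto_ofReal_cpow_atTop_zero {e : ℂ} (he : e.re < 0) :
    Tendsto (fun t : ℝ => (t : ℂ) ^ e) atTop (𝓝 0) := by
  rw [tendsto_zero_iff_norm_tendsto_zero]
  have h := tendsto_rpow_neg_atTop (neg_pos.2 he)
  rw [neg_neg] at h
  refine h.congr' ?_
  filter_upwards [eventually_gt_atTop 0] with t ht
  rw [norm_cpow_eq_rpow_re_of_pos ht]

lemma tendsto_I_mul_cpow_atTop_zero {e : ℂ} (he : e.re < 0) :
    Tendsto (fun t : ℝ => (I * t) ^ e) atTop (𝓝 0) := by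
  have h := (tendsto_ofReal_cpow_atTop_zero he).mul_const (I ^ e)
  rw [zero_mul] at h
  refine h.congr' ?_
  filter_upwards [eventually_gt_atTop 0] with t ht
  rw [mul_comm I, ofReal_mul_cpow ht I_ne_zero]

theorem tendsto_betaIntegral_mul_I_mul_cpow {z c : ℂ} (hz : 0 < z.re) (hc0 : 0 < c.re)
    (hc1 : c.re < 1) :
    Tendsto (fun t : ℝ => betaIntegral (z + I * t) c * (I * t) ^ c) atTop (𝓝 (Gamma c)) := by
  set J : ℂ → ℂ := fun w => ∫ u in Ioi (0 : ℝ), cexp (-(w * u)) * betaRemainderDeriv c u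
  have hre : ∀ t : ℝ, (z + I * t).re = z.re := by simp
  -- on a vertical line the bound `‖J w‖ ≤ ∫ e^{-u Re w} ‖·‖` does not depend on `Im w`
  have hJ : IsBoundedUnder (· ≤ ·) atTop (fun t : ℝ => ‖J (z + I * t)‖) := by
    refine isBoundedUnder_of ⟨∫ u in Ioi (0 : ℝ), ‖cexp (-(z * u)) * betaRemainderDeriv c u‖,
      fun t => (norm_integral_le_integral_norm _).trans_eq (integral_congr_ae ?_)⟩
    filter_upwards with u
    simp only [norm_mul, norm_exp, neg_re, mul_re, ofReal_re, ofReal_im, hre, mul_zero, sub_zero]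
  have hsmall : Tendsto (fun t : ℝ => (I * t) / (z + I * t) * (I * t) ^ (c - 1)) atTop (𝓝 0) := by
    have h := ((tendsto_add_I_mul_div_I_mul z).inv₀ one_ne_zero).mul
      (tendsto_I_mul_cpow_atTop_zero (e := c - 1) (by simp; linarith))
    simpa only [inv_div, mul_zero] using h
  have h := ((tendsto_add_I_mul_cpow_neg_mul_I_mul_cpow z c).const_mul (Gamma c)).add
    (hsmall.zero_mul_isBoundedUnder_le hJ)
  rw [mul_one, add_zero] at h
  refine h.congr' ?_
  filter_upwards [eventually_gt_atTop 0] with t ht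
  have hIt := I_mul_ofReal_ne_zero ht
  rw [betaIntegral_eq_Gamma_mul_cpow_add hc0 hc1.le (by rw [hre]; exact hz), cpow_sub _ _ hIt,
    cpow_one]
  have ht' : (t : ℂ) ≠ 0 := ofReal_ne_zero.2 ht.ne'
  simp only [J]
  generalize ∫ u in Ioi (0 : ℝ), cexp (-((z + I * t) * u)) * betaRemainderDeriv c u = A
  field_simp

/-! ### The Gamma function on vertical lines -/

lemma Gamma_ne_zero_of_im_ne_zero {s : ℂ} (hs : s.im ≠ 0) : Gamma s ≠ 0 :=
  Gamma_ne_zero fun m h => hs (by simp [h])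

noncomputable def gammaVertical (a : ℂ) (t : ℝ) : ℂ :=
  Gamma (a + I * t) * (I * t) ^ (-a)

lemma gammaVertical_add_one (a : ℂ) : gammaVertical (a + 1) ~[atTop] gammaVertical a := by
  refine isEquivalent_iff_exists_eq_mul.2 ⟨_, tendsto_add_I_mul_div_I_mul a, ?_⟩
  filter_upwards [eventually_gt_atTop 0, eventually_gt_atTop (-a.im)] with t ht hat
  have ha : a + I * t ≠ 0 := fun h => by
    have := congrArg im h
    simp at this
    linarith
  have hIt := I_mul_ofReal_ne_zero ht
  simp only [gammaVertical, Pi.mul_apply]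
  rw [show a + 1 + I * t = a + I * t + 1 by ring, Gamma_add_one _ ha, neg_add, cpow_add _ _ hIt,
    cpow_neg_one]
  field_simp

lemma gammaVertical_add_intCast (a : ℂ) (k : ℤ) :
    gammaVertical (a + k) ~[atTop] gammaVertical a := by
  induction k using Int.induction_on with
  | zero => simpa using IsEquivalent.refl
  | succ k ih => simpa [add_assoc] using (gammaVertical_add_one (a + k)).trans ih
  | pred k ih =>
    have h := gammaVertical_add_one (a + (-k - 1 : ℤ))
    rw [show a + ((-k - 1 : ℤ) : ℂ) + 1 = a + (-k : ℤ) by push_cast; ring] at h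
    exact h.symm.trans ih

lemma gammaVertical_add {z c : ℂ} (hz : 0 < z.re) (hc0 : 0 < c.re) (hc1 : c.re < 1) :
    gammaVertical (z + c) ~[atTop] gammaVertical z := by
  have hΓc := Gamma_ne_zero_of_re_pos hc0
  have hφ := (tendsto_const_nhds (x := Gamma c)).div
    (tendsto_betaIntegral_mul_I_mul_cpow hz hc0 hc1) hΓc
  rw [div_self hΓc] at hφ
  refine isEquivalent_iff_exists_eq_mul.2 ⟨_, hφ, ?_⟩
  filter_upwards [eventually_gt_atTop 0] with t ht
  have hIt := I_mul_ofReal_ne_zero ht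
  have hw : 0 < (z + I * t).re := by simpa using hz
  have hΓw := Gamma_ne_zero_of_re_pos hw
  have hΓwc := Gamma_ne_zero_of_re_pos (show 0 < (z + I * t + c).re by simp; linarith)
  have hB := betaIntegral_eq_Gamma_mul_div _ _ hw hc0
  have hB0 : betaIntegral (z + I * t) c ≠ 0 := by
    rw [hB]
    exact div_ne_zero (mul_ne_zero hΓw hΓc) hΓwc
  simp only [gammaVertical, Pi.mul_apply, Pi.div_apply]
  have hΓsum :
      Gamma (z + I * t + c) = Gamma (z + I * t) * Gamma c / betaIntegral (z + I * t) c := by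
    rw [hB]
    field_simp
  rw [show z + c + I * t = z + I * t + c by ring, hΓsum, neg_add, cpow_add _ _ hIt, cpow_neg _ c]
  field_simp

theorem gammaVertical_isEquivalent (a b : ℂ) : gammaVertical a ~[atTop] gammaVertical b := by
  obtain ⟨n, hn⟩ := exists_nat_gt (-b.re)
  set B := b + ((n : ℤ) : ℂ)
  have hB : 0 < B.re := by simp only [B, add_re, Int.cast_natCast, natCast_re]; linarith
  set A := a + ((⌊B.re - a.re⌋ + 1 : ℤ) : ℂ)
  have hAB : 0 < (A - B).re ∧ (A - B).re ≤ 1 := by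
    simp only [A, sub_re, add_re, Int.cast_add, Int.cast_one, intCast_re, one_re]
    constructor <;> linarith [Int.lt_floor_add_one (B.re - a.re), Int.floor_le (B.re - a.re)]
  -- the increment may have real part exactly `1`, so go from `B` to `A` in two halves
  set c := (A - B) / 2
  have hc : 0 < c.re ∧ c.re < 1 := by
    simp only [c, div_ofNat_re]
    constructor <;> linarith
  have hBc : 0 < (B + c).re := by rw [add_re]; linarith
  have hA : A = B + c + c := by simp only [c]; ring
  exact (gammaVertical_add_intCast a _).symm.trans <|
    (hA ▸ gammaVertical_add hBc hc.1 hc.2).trans <|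
    (gammaVertical_add hB hc.1 hc.2).trans (gammaVertical_add_intCast b _)

lemma isEquivalent_conj {α : Type*} {l : Filter α} {u v : α → ℂ} (h : u ~[l] v) :
    (fun x => conj (u x)) ~[l] (fun x => conj (v x)) := by
  rw [IsEquivalent, ← isLittleO_norm_norm] at h ⊢
  simpa only [Pi.sub_apply, ← map_sub, RCLike.norm_conj] using h

lemma I_cpow_mul_neg_I_cpow (e : ℂ) : I ^ e * (-I) ^ e = 1 := by
  rw [cpow_def_of_ne_zero I_ne_zero, cpow_def_of_ne_zero (neg_ne_zero.2 I_ne_zero), ← exp_add,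
    log_I, log_neg_I, ← add_mul, ← exp_zero]
  ring_nf

lemma gammaVertical_mul_conj (a : ℂ) {t : ℝ} (ht : 0 < t) :
    gammaVertical a t * conj (gammaVertical (conj a) t)
      = Gamma (a + I * t) * Gamma (a - I * t) * (t : ℂ) ^ (-(2 * a)) := by
  have hconj : conj (I * t) = t * -I := by simp [mul_comm]
  have harg : (I * (t : ℂ)).arg ≠ Real.pi := by
    rw [mul_comm, arg_real_mul _ ht, arg_I]
    linarith [Real.pi_pos]
  have hpow : conj ((I * t) ^ (-conj a)) = (t * -I) ^ (-a) := by
    rw [← hconj, conj_cpow _ _ harg, map_neg]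
  simp only [gammaVertical, map_mul, ← Gamma_conj, map_add, conj_conj, hconj, hpow]
  rw [mul_comm I, ofReal_mul_cpow ht I_ne_zero, ofReal_mul_cpow ht (neg_ne_zero.2 I_ne_zero),
    show -(2 * a) = -a + -a by ring, cpow_add _ _ (ofReal_ne_zero.2 ht.ne'),
    show a + (t : ℂ) * -I = a - t * I by ring]
  linear_combination Gamma (a + t * I) * Gamma (a - t * I) * (t : ℂ) ^ (-a) * (t : ℂ) ^ (-a) *
    I_cpow_mul_neg_I_cpow (-a)

theorem tendsto_Gamma_mul_Gamma_div_mul_cpow (a b : ℂ) :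
    Tendsto (fun t : ℝ => Gamma (a + I * t) * Gamma (a - I * t) /
      (Gamma (b + I * t) * Gamma (b - I * t)) * (t : ℂ) ^ (2 * (b - a))) atTop (𝓝 1) := by
  have h := (gammaVertical_isEquivalent a b).mul
    (isEquivalent_conj (gammaVertical_isEquivalent (conj a) (conj b)))
  have hΓ : ∀ᶠ t : ℝ in atTop, Gamma (b + I * t) * Gamma (b - I * t) ≠ 0 := by
    filter_upwards [eventually_gt_atTop |b.im|] with t ht
    have := le_abs_self b.im
    have := neg_abs_le b.im
    exact mul_ne_zero (Gamma_ne_zero_of_im_ne_zero (by simp; linarith))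
      (Gamma_ne_zero_of_im_ne_zero (by simp; linarith))
  have hne : ∀ᶠ t : ℝ in atTop, gammaVertical b t * conj (gammaVertical (conj b) t) ≠ 0 := by
    filter_upwards [hΓ, eventually_gt_atTop 0] with t hΓt ht
    rw [gammaVertical_mul_conj b ht]
    exact mul_ne_zero hΓt (by simp [cpow_eq_zero_iff, ht.ne'])
  refine ((isEquivalent_iff_tendsto_one hne).1 h).congr' ?_
  filter_upwards [hΓ, eventually_gt_atTop 0] with t hΓt ht
  have ht' : (t : ℂ) ≠ 0 := ofReal_ne_zero.2 ht.ne'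
  simp only [Pi.div_apply, Pi.mul_apply, gammaVertical_mul_conj _ ht]
  rw [show 2 * (b - a) = -(2 * a) - -(2 * b) by ring, cpow_sub _ _ ht']
  field_simp

end GammaVertical

open GammaVertical

/-- Leading-order asymptotic `β_κ(s)/β_κ(1−s) ∼ (ωκ/2)^{2s−1}` as `κ → +∞`. -/
theorem stmt5 (ω : ℝ) (hω : 0 < ω) (s : ℂ) :
    Tendsto (fun κ : ℝ =>
      betaFun ω κ s / betaFun ω κ (1 - s) * (((ω * κ / 2 : ℝ) : ℂ) ^ ((1 : ℂ) - 2 * s)))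
      atTop (nhds 1) := by
  have h := (tendsto_Gamma_mul_Gamma_div_mul_cpow ((s + 1) / 2) ((2 - s) / 2)).comp
    ((tendsto_id.const_mul_atTop hω).atTop_div_const two_pos)
  refine h.congr fun κ => ?_
  simp only [Function.comp_apply, id, betaFun]
  rw [show 2 * ((2 - s) / 2 - (s + 1) / 2) = 1 - 2 * s by ring]
  congr 1
  push_cast
  rw [show (s + I * ω * κ + 1) / 2 = (s + 1) / 2 + I * (ω * κ / 2) by ring,
    show (s - I * ω * κ + 1) / 2 = (s + 1) / 2 - I * (ω * κ / 2) by ring,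
    show (1 - s + I * ω * κ + 1) / 2 = (2 - s) / 2 + I * (ω * κ / 2) by ring,
    show (1 - s - I * ω * κ + 1) / 2 = (2 - s) / 2 - I * (ω * κ / 2) by ring]
  simp only [mul_assoc (1 / 2 : ℂ)]
  rw [mul_div_mul_left _ _ (by norm_num : (1 / 2 : ℂ) ≠ 0)]
end

section
/- Fix s ∈ ℂ, a real number ω > 0, and ϑ ∈ ℝ, and for κ ∈ ℝ set β_κ(s) := (1/2)·Γ((s + iωκ + 1)/2)·Γ((s − iωκ + 1)/2). Then there exists a constant C > 0 such that for every k ∈ ℤ with Γ(s − 1/2)·β_{k+ϑ}(1 − s) ≠ 0, one has |Γ(1/2 − s)·β_{k+ϑ}(s) / (Γ(s − 1/2)·β_{k+ϑ}(1 − s))| ≤ C·(1 + |k|)^{2·Re s − 1}. -/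
open Complex

/-!
Write `w± = (s ± iωκ + 1)/2`. The symbol is `Γ(1/2 - s)/Γ(s - 1/2) · ∏± Γ(w±)/Γ(3/2 - w±)`, and by
conjugation `|Γ(3/2 - w)| = |Γ(w + δ)|` with the real shift `δ = 1/2 - Re s`. So everything reduces
to the estimate `|Γ(z)/Γ(z + δ)| ≤ C |z|^(-δ)` for `|Im z|` large, together with `|w±| ≍ 1 + |k|`.

That estimate comes from Euler's limit formula: `log |Γₙ(z)/Γₙ(z + δ)|` is `-δ log n` plus
`∑_{j ≤ n} (log |z + δ + j| - log |z + j|)`, and each summand is `δ (log |z + j + 1| - log |z + j|)`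
up to `O(1/|z + j|²)`. The main terms telescope to `δ log (|z + n + 1|/|z|)`, and the errors sum
to at most a multiple of `∑ⱼ 1/((x + j)² + 4) ≤ π`, uniformly in `n` and `Im z`.
-/

open Filter Topology Asymptotics
open scoped Real Nat ComplexConjugate

namespace Real

theorem inv_sq_add_four_le_arctan_sub (u : ℝ) :
    1 / (u ^ 2 + 4) ≤ arctan ((u + 1) / 2) - arctan (u / 2) := by
  have hderiv (v : ℝ) : HasDerivAt (fun w ↦ arctan (w / 2)) (2 / (v ^ 2 + 4)) v := by
    refine ((hasDerivAt_id v).div_const 2).arctan.congr_deriv ?_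
    simp only [id]
    field_simp
    ring
  obtain ⟨c, ⟨huc, hcu⟩, hc⟩ := exists_hasDerivAt_eq_slope (fun w ↦ arctan (w / 2))
    (fun v ↦ 2 / (v ^ 2 + 4)) (lt_add_one u)
    (fun v _ ↦ (hderiv v).continuousAt.continuousWithinAt) (fun v _ ↦ hderiv v)
  have hc_sq : c ^ 2 ≤ 2 * u ^ 2 + 4 := by nlinarith [mul_pos (sub_pos.2 huc) (sub_pos.2 hcu)]
  calc 1 / (u ^ 2 + 4) ≤ 2 / (c ^ 2 + 4) := by
        rw [div_le_div_iff₀ (by positivity) (by positivity)]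
        linarith
    _ = arctan ((u + 1) / 2) - arctan (u / 2) := by rw [hc]; simp

theorem sum_inv_sq_add_four_le_pi (x : ℝ) (n : ℕ) :
    ∑ j ∈ Finset.range n, 1 / ((x + j) ^ 2 + 4) ≤ π := by
  calc ∑ j ∈ Finset.range n, 1 / ((x + j) ^ 2 + 4)
      ≤ ∑ j ∈ Finset.range n, (arctan ((x + (j + 1 : ℕ)) / 2) - arctan ((x + j) / 2)) := by
        refine Finset.sum_le_sum fun j _ ↦ ?_
        simpa [add_assoc] using inv_sq_add_four_le_arctan_sub (x + j)
    _ = arctan ((x + n) / 2) - arctan (x / 2) := by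
        simpa using Finset.sum_range_sub (fun j ↦ arctan ((x + j) / 2)) n
    _ ≤ π := by linarith [arctan_lt_pi_div_two ((x + n) / 2), neg_pi_div_two_lt_arctan (x / 2)]

end Real

theorem tendsto_abs_intCast_cofinite : Tendsto (fun k : ℤ ↦ |(k : ℝ)|) cofinite atTop :=
  tendsto_norm_cocompact_atTop.comp Int.tendsto_coe_cofinite

theorem isTheta_norm_add_mul_intCast {a b : ℂ} (hb : b ≠ 0) :
    (fun k : ℤ ↦ ‖a + b * k‖) =Θ[cofinite] fun k ↦ 1 + |(k : ℝ)| := by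
  have hb' : 0 < ‖b‖ := norm_pos_iff.2 hb
  have hnorm (k : ℤ) : ‖b * k‖ = ‖b‖ * |(k : ℝ)| := by simp
  refine ⟨.of_bound (‖a‖ + ‖b‖) (.of_forall fun k ↦ ?_), .of_bound (2 / ‖b‖) ?_⟩
  · rw [norm_norm, Real.norm_of_nonneg (by positivity)]
    have := norm_add_le a (b * k)
    rw [hnorm] at this
    nlinarith [norm_nonneg a, abs_nonneg (k : ℝ)]
  · filter_upwards [tendsto_abs_intCast_cofinite.eventually_ge_atTop ((2 * ‖a‖ + ‖b‖) / ‖b‖)]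
      with k hk
    rw [norm_norm, Real.norm_of_nonneg (by positivity), div_mul_eq_mul_div,
      le_div_iff₀ hb']
    rw [div_le_iff₀ hb'] at hk
    have := norm_sub_norm_le (b * k) (-a)
    rw [sub_neg_eq_add, norm_neg, add_comm, hnorm] at this
    nlinarith

theorem tendsto_abs_im_add_mul_intCast {a b : ℂ} (hb : b ≠ 0) (hre : b.re = 0) :
    Tendsto (fun k : ℤ ↦ |(a + b * k).im|) cofinite atTop := by
  have him : 0 < |b.im| := abs_pos.2 fun h ↦ hb (Complex.ext hre h)
  refine tendsto_atTop_mono (fun k ↦ ?_) (tendsto_atTop_add_const_right _ (-|a.im|)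
    (tendsto_abs_intCast_cofinite.const_mul_atTop him))
  have := abs_sub_abs_le_abs_sub (b.im * k) (-a.im)
  simp only [abs_mul, abs_neg, sub_neg_eq_add] at this
  simpa [add_comm] using this

namespace Complex

theorem abs_log_norm_add_ofReal_sub_le {z : ℂ} {δ : ℝ} (hδ : 2 * |δ| ≤ ‖z‖) :
    |Real.log ‖z + δ‖ - Real.log ‖z‖ - δ * (z⁻¹).re| ≤ δ ^ 2 / ‖z‖ ^ 2 := by
  rcases eq_or_ne z 0 with rfl | hz
  · obtain rfl : δ = 0 := abs_nonpos_iff.1 (by rw [norm_zero] at hδ; linarith)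
    simp
  have hz' : 0 < ‖z‖ := norm_pos_iff.2 hz
  have hu : ‖(δ / z : ℂ)‖ ≤ 1 / 2 := by
    rw [norm_div, norm_real, Real.norm_eq_abs, div_le_iff₀ hz']
    linarith
  have hzδ : 0 < ‖z + δ‖ := by
    have := norm_sub_norm_le z (-δ)
    simp only [sub_neg_eq_add, norm_neg, norm_real, Real.norm_eq_abs] at this
    linarith [abs_nonneg δ]
  have hlog : Real.log ‖z + δ‖ - Real.log ‖z‖ = (log (1 + δ / z)).re := by
    rw [log_re, one_add_div hz, norm_div, Real.log_div hzδ.ne' hz'.ne']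
  have hre : δ * (z⁻¹).re = (δ / z : ℂ).re := by
    rw [div_eq_mul_inv, re_ofReal_mul]
  rw [hlog, hre, ← sub_re]
  calc |(log (1 + δ / z) - δ / z).re| ≤ ‖log (1 + δ / z) - δ / z‖ := abs_re_le_norm _
    _ ≤ ‖(δ / z : ℂ)‖ ^ 2 * (1 - ‖(δ / z : ℂ)‖)⁻¹ / 2 :=
        norm_log_one_add_sub_self_le (by linarith)
    _ ≤ ‖(δ / z : ℂ)‖ ^ 2 := by
        have : (1 - ‖(δ / z : ℂ)‖)⁻¹ ≤ 2 := by
          rw [inv_le_comm₀ (by linarith) two_pos]; linarith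
        nlinarith [sq_nonneg ‖(δ / z : ℂ)‖]
    _ = δ ^ 2 / ‖z‖ ^ 2 := by rw [norm_div, norm_real, Real.norm_eq_abs, div_pow, sq_abs]

theorem abs_log_norm_add_ofReal_sub_mul_le {w : ℂ} {δ : ℝ} (hw : 2 ≤ ‖w‖) (hδ : 2 * |δ| ≤ ‖w‖) :
    |Real.log ‖w + δ‖ - Real.log ‖w‖ - δ * (Real.log ‖w + 1‖ - Real.log ‖w‖)| ≤
      (δ ^ 2 + |δ|) / ‖w‖ ^ 2 := by
  have hshift := abs_log_norm_add_ofReal_sub_le hδ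
  have hone : |Real.log ‖w + 1‖ - Real.log ‖w‖ - (w⁻¹).re| ≤ 1 / ‖w‖ ^ 2 := by
    simpa using abs_log_norm_add_ofReal_sub_le (z := w) (δ := 1) (by simpa using hw)
  calc _ = |(Real.log ‖w + δ‖ - Real.log ‖w‖ - δ * (w⁻¹).re) -
          δ * (Real.log ‖w + 1‖ - Real.log ‖w‖ - (w⁻¹).re)| := by ring_nf
    _ ≤ δ ^ 2 / ‖w‖ ^ 2 + |δ| * (1 / ‖w‖ ^ 2) := by
        refine (abs_sub _ _).trans (add_le_add hshift ?_)
        rw [abs_mul]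
        exact mul_le_mul_of_nonneg_left hone (abs_nonneg δ)
    _ = (δ ^ 2 + |δ|) / ‖w‖ ^ 2 := by ring

theorem abs_sum_log_norm_add_sub_le {z : ℂ} {δ : ℝ} (hz : 2 ≤ |z.im|) (hδ : 2 * |δ| ≤ |z.im|)
    (N : ℕ) :
    |∑ j ∈ Finset.range N, (Real.log ‖z + δ + j‖ - Real.log ‖z + j‖) -
      δ * (Real.log ‖z + N‖ - Real.log ‖z‖)| ≤ (δ ^ 2 + |δ|) * π := by
  set f : ℕ → ℝ := fun j ↦ Real.log ‖z + j‖
  have hterm (j : ℕ) : |Real.log ‖z + δ + j‖ - f j - δ * (f (j + 1) - f j)| ≤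
      (δ ^ 2 + |δ|) * (1 / ((z.re + j) ^ 2 + 4)) := by
    have him : |(z + j).im| = |z.im| := by simp
    have hnorm : |z.im| ≤ ‖z + j‖ := him ▸ abs_im_le_norm _
    have hsq : (z.re + j) ^ 2 + 4 ≤ ‖z + j‖ ^ 2 := by
      rw [← normSq_eq_norm_sq, normSq_apply]
      simp only [add_re, natCast_re, add_im, natCast_im, add_zero]
      nlinarith [sq_abs z.im]
    have := abs_log_norm_add_ofReal_sub_mul_le (w := z + j) (δ := δ) (by linarith) (by linarith)
    rw [add_right_comm] at this
    simp only [f]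
    push_cast
    rw [← add_assoc]
    refine this.trans ?_
    rw [← div_eq_mul_one_div]
    gcongr
  calc _ = |∑ j ∈ Finset.range N, (Real.log ‖z + δ + j‖ - f j - δ * (f (j + 1) - f j))| := by
        congr 1
        rw [Finset.sum_sub_distrib (f := fun j : ℕ ↦ Real.log ‖z + δ + j‖ - f j), ← Finset.mul_sum,
          Finset.sum_range_sub]
        simp [f]
    _ ≤ ∑ j ∈ Finset.range N, (δ ^ 2 + |δ|) * (1 / ((z.re + j) ^ 2 + 4)) :=
        (Finset.abs_sum_le_sum_abs _ _).trans (Finset.sum_le_sum fun j _ ↦ hterm j)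
    _ ≤ (δ ^ 2 + |δ|) * π := by
        rw [← Finset.mul_sum]
        gcongr
        exact Real.sum_inv_sq_add_four_le_pi _ _

theorem tendsto_log_norm_add_natCast_sub_log (z : ℂ) :
    Tendsto (fun n : ℕ ↦ Real.log ‖z + n‖ - Real.log n) atTop (𝓝 0) := by
  have hlim : Tendsto (fun n : ℕ ↦ Real.log ‖z / n + 1‖) atTop (𝓝 0) := by
    have := ((tendsto_const_div_atTop_nhds_zero_nat z).add_const 1).norm.log (by simp)
    simpa using this
  refine hlim.congr' ?_
  filter_upwards [tendsto_natCast_atTop_atTop.eventually_gt_atTop ‖z‖] with n hn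
  have hn0 : (0 : ℝ) < n := (norm_nonneg z).trans_lt hn
  have hzn : 0 < ‖z + n‖ := by
    have := norm_sub_norm_le (n : ℂ) (-z)
    rw [sub_neg_eq_add, norm_neg, Complex.norm_natCast, add_comm] at this
    linarith
  rw [← Real.log_div hzn.ne' hn0.ne', div_add_one (by exact_mod_cast hn0.ne'), norm_div,
    Complex.norm_natCast]

theorem log_norm_GammaSeq {z : ℂ} (hz : z.im ≠ 0) {n : ℕ} (hn : n ≠ 0) :
    Real.log ‖GammaSeq z n‖ =
      z.re * Real.log n + Real.log n ! - ∑ j ∈ Finset.range (n + 1), Real.log ‖z + j‖ := by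
  have hfac (j : ℕ) : ‖z + j‖ ≠ 0 := by
    rw [norm_ne_zero_iff]
    intro h
    simpa [hz] using congrArg im h
  have hn' : (0 : ℝ) < n := by positivity
  rw [GammaSeq, norm_div, norm_mul, norm_natCast_cpow_of_pos (Nat.pos_of_ne_zero hn),
    Complex.norm_natCast, norm_prod, Real.log_div, Real.log_mul, Real.log_rpow, Real.log_prod]
  · exact fun j _ ↦ hfac j
  all_goals first | positivity | exact Finset.prod_ne_zero_iff.2 fun j _ ↦ hfac j

theorem Gamma_ne_zero_of_im_ne_zero {z : ℂ} (hz : z.im ≠ 0) : Gamma z ≠ 0 :=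
  Gamma_ne_zero fun m h ↦ hz (by simp [h])

theorem abs_log_norm_Gamma_sub_log_norm_Gamma_add_le {z : ℂ} {δ : ℝ} (hz : 2 ≤ |z.im|)
    (hδ : 2 * |δ| ≤ |z.im|) :
    |Real.log ‖Gamma z‖ - Real.log ‖Gamma (z + δ)‖ + δ * Real.log ‖z‖| ≤ (δ ^ 2 + |δ|) * π := by
  have him : z.im ≠ 0 := abs_pos.1 (by linarith)
  have him' : (z + δ).im ≠ 0 := by simpa using him
  have hseq {w : ℂ} (hw : w.im ≠ 0) :
      Tendsto (fun n ↦ Real.log ‖GammaSeq w n‖) atTop (𝓝 (Real.log ‖Gamma w‖)) :=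
    (GammaSeq_tendsto_Gamma w).norm.log (norm_ne_zero_iff.2 (Gamma_ne_zero_of_im_ne_zero hw))
  set u : ℕ → ℝ := fun n ↦ Real.log ‖GammaSeq z n‖ - Real.log ‖GammaSeq (z + δ) n‖ +
    δ * Real.log ‖z‖ - δ * (Real.log ‖z + 1 + n‖ - Real.log n)
  have hu : Tendsto u atTop
      (𝓝 (Real.log ‖Gamma z‖ - Real.log ‖Gamma (z + δ)‖ + δ * Real.log ‖z‖ - δ * 0)) :=
    (((hseq him).sub (hseq him')).add_const _).sub
      ((tendsto_log_norm_add_natCast_sub_log (z + 1)).const_mul δ)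
  rw [mul_zero, sub_zero] at hu
  refine le_of_tendsto hu.abs ?_
  filter_upwards [eventually_ne_atTop 0] with n hn
  refine (le_of_eq ?_).trans (abs_sum_log_norm_add_sub_le hz hδ (n + 1))
  congr 1
  simp only [u, log_norm_GammaSeq him hn, log_norm_GammaSeq him' hn, Finset.sum_sub_distrib]
  push_cast
  simp only [add_re, ofReal_re]
  ring_nf

theorem norm_Gamma_ofReal_sub (c : ℝ) (w : ℂ) :
    ‖Gamma (c - w)‖ = ‖Gamma (w + (c - 2 * w.re : ℝ))‖ := by
  have : (c : ℂ) - w = conj (w + (c - 2 * w.re : ℝ)) := by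
    rw [map_add, conj_ofReal]
    push_cast [← add_conj w]
    ring
  rw [this, Gamma_conj, norm_conj]

theorem norm_Gamma_div_Gamma_add_le {z : ℂ} {δ : ℝ} (hz : 2 ≤ |z.im|) (hδ : 2 * |δ| ≤ |z.im|) :
    ‖Gamma z / Gamma (z + δ)‖ ≤ Real.exp ((δ ^ 2 + |δ|) * π) * ‖z‖ ^ (-δ) := by
  have him : z.im ≠ 0 := abs_pos.1 (by linarith)
  have hΓ : 0 < ‖Gamma z‖ := norm_pos_iff.2 (Gamma_ne_zero_of_im_ne_zero him)
  have hΓδ : 0 < ‖Gamma (z + δ)‖ :=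
    norm_pos_iff.2 (Gamma_ne_zero_of_im_ne_zero (by simpa using him))
  have hz0 : 0 < ‖z‖ := norm_pos_iff.2 fun h ↦ him (by simp [h])
  have := le_of_abs_le (abs_log_norm_Gamma_sub_log_norm_Gamma_add_le hz hδ)
  rw [norm_div, Real.rpow_def_of_pos hz0, ← Real.exp_add, ← Real.exp_log (div_pos hΓ hΓδ),
    Real.exp_le_exp, Real.log_div hΓ.ne' hΓδ.ne']
  linarith

theorem Gamma_div_Gamma_sub_isBigO {ι : Type*} {l : Filter ι} {w : ι → ℂ} {x : ℝ}
    (hre : ∀ i, (w i).re = x) (him : Tendsto (fun i ↦ |(w i).im|) l atTop) (c : ℝ) :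
    (fun i ↦ Gamma (w i) / Gamma (c - w i)) =O[l] fun i ↦ ‖w i‖ ^ (2 * x - c) := by
  set δ := c - 2 * x
  refine .of_bound (Real.exp ((δ ^ 2 + |δ|) * π)) ?_
  filter_upwards [him.eventually_ge_atTop (max 2 (2 * |δ|))] with i hi
  rw [norm_div, norm_Gamma_ofReal_sub, hre, ← norm_div, Real.norm_of_nonneg (by positivity),
    show 2 * x - c = -δ by ring]
  exact norm_Gamma_div_Gamma_add_le (le_of_max_le_left hi) (le_of_max_le_right hi)

theorem Gamma_div_Gamma_sub_affine_isBigO {a b : ℂ} (hb : b ≠ 0) (hre : b.re = 0) (c : ℝ) :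
    (fun k : ℤ ↦ Gamma (a + b * k) / Gamma (c - (a + b * k))) =O[cofinite]
      fun k ↦ (1 + |(k : ℝ)|) ^ (2 * a.re - c) :=
  (Gamma_div_Gamma_sub_isBigO (x := a.re) (fun k ↦ by simp [hre])
    (tendsto_abs_im_add_mul_intCast hb hre) c).trans
    ((isTheta_norm_add_mul_intCast hb).rpow (.of_forall fun _ ↦ norm_nonneg _)
      (.of_forall fun _ ↦ by positivity)).isBigO

end Complex

theorem betaFun_symbol_isBigO (s : ℂ) {ω : ℝ} (hω : ω ≠ 0) (ϑ : ℝ) :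
    (fun k : ℤ ↦ Gamma (1 / 2 - s) * betaFun ω (k + ϑ) s /
        (Gamma (s - 1 / 2) * betaFun ω (k + ϑ) (1 - s))) =O[cofinite]
      fun k ↦ (1 + |(k : ℝ)|) ^ (2 * s.re - 1) := by
  set a : ℝ → ℂ := fun t ↦ (s + 1 + I * t * ϑ) / 2
  set b : ℝ → ℂ := fun t ↦ I * t / 2
  have hfactor {t : ℝ} (ht : t ≠ 0) :
      (fun k : ℤ ↦ Gamma (a t + b t * k) / Gamma ((3 / 2 : ℝ) - (a t + b t * k))) =O[cofinite]
        fun k ↦ (1 + |(k : ℝ)|) ^ (s.re - 1 / 2) := by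
    convert Gamma_div_Gamma_sub_affine_isBigO (a := a t) (b := b t) (by simp [b, ht]) (by simp [b])
      (3 / 2) using 3
    simp only [a, div_ofNat_re, add_re, one_re, mul_re, I_re, I_im, ofReal_re, ofReal_im]
    ring
  have hsplit (k : ℤ) : Gamma (1 / 2 - s) * betaFun ω (k + ϑ) s /
      (Gamma (s - 1 / 2) * betaFun ω (k + ϑ) (1 - s)) =
      Gamma (1 / 2 - s) / Gamma (s - 1 / 2) *
        (Gamma (a ω + b ω * k) / Gamma ((3 / 2 : ℝ) - (a ω + b ω * k)) *
          (Gamma (a (-ω) + b (-ω) * k) / Gamma ((3 / 2 : ℝ) - (a (-ω) + b (-ω) * k)))) := by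
    simp only [betaFun, a, b]
    push_cast
    ring_nf
  simp_rw [hsplit]
  refine (((hfactor hω).mul (hfactor (neg_ne_zero.2 hω))).const_mul_left _).congr_right
    fun k ↦ ?_
  rw [← Real.rpow_add (by positivity)]
  ring_nf

/-- Symbol estimate of order `2·Re s − 1` for the Fourier coefficients of the
funnel scattering matrix. -/
theorem stmt6 (s : ℂ) (ω : ℝ) (hω : 0 < ω) (ϑ : ℝ) :
    ∃ C > 0, ∀ k : ℤ,
      Complex.Gamma (s - 1/2) * betaFun ω (k + ϑ) (1 - s) ≠ 0 →
      ‖Complex.Gamma (1/2 - s) * betaFun ω (k + ϑ) s /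
          (Complex.Gamma (s - 1/2) * betaFun ω (k + ϑ) (1 - s))‖ ≤
        C * (1 + |(k : ℝ)|) ^ (2 * s.re - 1) := by
  obtain ⟨C, hC, hbound⟩ := bound_of_isBigO_cofinite (betaFun_symbol_isBigO s hω.ne' ϑ)
  refine ⟨C, hC, fun k _ ↦ ?_⟩
  have hpos : 0 < (1 + |(k : ℝ)|) ^ (2 * s.re - 1) := by positivity
  have := hbound hpos.ne'
  rwa [Real.norm_of_nonneg hpos.le] at this
end
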